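/- arXiv:1903.02714 — 3 statements merged into one kernel-verified Lean document; each statement's English description precedes it below -/
import Mathlib

section
/- Under the same hypotheses, for any x ∈ [a,b] \ {p} with u_{a,α}(λ,x) ≠ 0, ∂/∂λ [ u_{a,α}'(λ,x) / u_{a,α}(λ,x) ] = -(1 / u_{a,α}(λ,x)²) ∫_a^x u_{a,α}(λ,t)² dt. -/
open Filter Topology Set MeasureTheory

/-!
For two spectral parameters `μ, ν`, the Wronskian `W = u'_μ u_ν - u_μ u'_ν` has derivative
`(ν - μ) u_μ u_ν` away from `p`, and the δ-condition makes the jumps of `u'_μ` and `u'_ν` cancel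
in `W`, so `W` is continuous across `p`. Since `W(a) = 0`, integrating gives
`u'_μ(x) u_ν(x) - u_μ(x) u'_ν(x) = (ν - μ) ∫_a^x u_μ u_ν`. Dividing by `ν - μ` and letting
`ν → μ = λ`, the left side tends to `u'_λ ∂_λ u - u_λ ∂_λ u'` and the right side to `∫_a^x u_λ²`
by dominated convergence. The domination comes from a Gronwall bound for `|u| + |u'|`, uniform
for `ν` near `λ`; as `V` is only integrable, it is proved by cutting `[a, b]` into pieces on which
`∫ (|V| + const) ≤ 1 / 2`, each of which at most doubles the bound, while crossing `p` multiplies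
it by `1 + |α|`.
-/

theorem le_two_mul_of_le_add_integral_mul {k φ : ℝ → ℝ} {A B : ℝ} (hAB : A ≤ B)
    (hφ : ContinuousOn φ (Icc A B)) (hφ0 : ∀ t ∈ Icc A B, 0 ≤ φ t)
    (hk : IntegrableOn k (Icc A B)) (hk0 : ∀ t ∈ Icc A B, 0 ≤ k t)
    (hk_half : ∫ s in A..B, k s ≤ 1 / 2)
    (hφk : ∀ r ∈ Icc A B, φ r ≤ φ A + ∫ s in A..r, k s * φ s) :
    ∀ t ∈ Icc A B, φ t ≤ 2 * φ A := by
  obtain ⟨r, hr, hmax⟩ := isCompact_Icc.exists_isMaxOn (nonempty_Icc.2 hAB) hφ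
  have hsub : Icc A r ⊆ Icc A B := Icc_subset_Icc_right hr.2
  have hkr : ∫ s in A..r, k s ≤ 1 / 2 :=
    (intervalIntegral.integral_mono_interval le_rfl hr.1 hr.2
      (ae_restrict_of_forall_mem measurableSet_Ioc fun t ht => hk0 t (Ioc_subset_Icc_self ht))
      ((intervalIntegrable_iff_integrableOn_Icc_of_le hAB).2 hk)).trans hk_half
  have hint : ∫ s in A..r, k s * φ s ≤ (∫ s in A..r, k s) * φ r := by
    rw [← intervalIntegral.integral_mul_const]
    refine intervalIntegral.integral_mono_on hr.1 ?_ ?_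
      fun s hs => mul_le_mul_of_nonneg_left (hmax (hsub hs)) (hk0 s (hsub hs))
    · exact (intervalIntegrable_iff_integrableOn_Icc_of_le hr.1).2
        ((hk.mono_set hsub).mul_continuousOn (hφ.mono hsub) isCompact_Icc)
    · exact ((intervalIntegrable_iff_integrableOn_Icc_of_le hr.1).2 (hk.mono_set hsub)).mul_const _
  -- at a maximum point `r`, the integral term is at most `φ r / 2`
  have hφr : φ r ≤ 2 * φ A := by
    nlinarith [hφk r hr, mul_nonneg (sub_nonneg.2 hkr) (hφ0 r hr)]
  exact fun t ht => (hmax ht).trans hφr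

theorem le_two_pow_mul_of_le_add_integral_mul {k φ : ℝ → ℝ} {A B : ℝ} (n : ℕ) (hAB : A ≤ B)
    (hφ : ContinuousOn φ (Icc A B)) (hφ0 : ∀ t ∈ Icc A B, 0 ≤ φ t)
    (hk : IntegrableOn k (Icc A B)) (hk0 : ∀ t ∈ Icc A B, 0 ≤ k t)
    (hkn : ∫ s in A..B, k s ≤ n / 2)
    (hφk : ∀ c ∈ Icc A B, ∀ r ∈ Icc c B, φ r ≤ φ c + ∫ s in c..r, k s * φ s) :
    ∀ t ∈ Icc A B, φ t ≤ 2 ^ (n + 1) * φ A := by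
  have hφA : 0 ≤ φ A := hφ0 A ⟨le_rfl, hAB⟩
  induction n generalizing A with
  | zero =>
    simpa using le_two_mul_of_le_add_integral_mul hAB hφ hφ0 hk hk0 (by simp at hkn; linarith)
      fun r hr => hφk A ⟨le_rfl, hAB⟩ r hr
  | succ n ih =>
    by_cases hK : ∫ s in A..B, k s ≤ 1 / 2
    · intro t ht
      calc φ t ≤ 2 * φ A :=
            le_two_mul_of_le_add_integral_mul hAB hφ hφ0 hk hk0 hK
              (fun r hr => hφk A ⟨le_rfl, hAB⟩ r hr) t ht
        _ ≤ 2 ^ (n + 1 + 1) * φ A := by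
            gcongr; exact le_self_pow₀ (by norm_num) (by omega)
    -- cut `[A, B]` at the point `m` where the integral of `k` reaches `1 / 2`
    have hFc : ContinuousOn (fun t => ∫ s in A..t, k s) (Icc A B) := by
      rw [← uIcc_of_le hAB]
      exact intervalIntegral.continuousOn_primitive_interval (by rwa [uIcc_of_le hAB])
    obtain ⟨m, hm, hFm⟩ := intermediate_value_Icc hAB hFc
      ⟨by simp, (not_le.1 hK).le⟩
    have hsubL : Icc A m ⊆ Icc A B := Icc_subset_Icc_right hm.2
    have hsubR : Icc m B ⊆ Icc A B := Icc_subset_Icc_left hm.1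
    have hL : ∀ t ∈ Icc A m, φ t ≤ 2 * φ A :=
      le_two_mul_of_le_add_integral_mul hm.1 (hφ.mono hsubL) (fun t ht => hφ0 t (hsubL ht))
        (hk.mono_set hsubL) (fun t ht => hk0 t (hsubL ht)) hFm.le
        fun r hr => hφk A ⟨le_rfl, hAB⟩ r ⟨hr.1, hr.2.trans hm.2⟩
    have hkR : ∫ s in m..B, k s ≤ n / 2 := by
      have hsplit := intervalIntegral.integral_add_adjacent_intervals
        ((intervalIntegrable_iff_integrableOn_Icc_of_le hm.1).2 (hk.mono_set hsubL))
        ((intervalIntegrable_iff_integrableOn_Icc_of_le hm.2).2 (hk.mono_set hsubR))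
      push_cast at hkn
      linarith
    have hR := ih hm.2 (hφ.mono hsubR) (fun t ht => hφ0 t (hsubR ht)) (hk.mono_set hsubR)
      (fun t ht => hk0 t (hsubR ht)) hkR
      (fun c hc r hr => hφk c ⟨hm.1.trans hc.1, hc.2⟩ r hr) (hφ0 m (hsubL ⟨hm.1, le_rfl⟩))
    intro t ht
    rcases le_total t m with htm | hmt
    · calc φ t ≤ 2 * φ A := hL t ⟨ht.1, htm⟩
        _ ≤ 2 ^ (n + 1 + 1) * φ A := by
            gcongr; exact le_self_pow₀ (by norm_num) (by omega)
    · calc φ t ≤ 2 ^ (n + 1) * φ m := hR t ⟨hmt, ht.2⟩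
        _ ≤ 2 ^ (n + 1) * (2 * φ A) := by gcongr; exact hL m ⟨hm.1, le_rfl⟩
        _ = 2 ^ (n + 1 + 1) * φ A := by ring

theorem abs_add_abs_le_add_integral {y Y q k : ℝ → ℝ} {c d : ℝ} (hcd : c ≤ d)
    (hy : ContinuousOn y (Icc c d)) (hY : ContinuousOn Y (Icc c d))
    (hyd : ∀ t ∈ Ioo c d, HasDerivAt y (Y t) t) (hYd : ∀ t ∈ Ioo c d, HasDerivAt Y (q t * y t) t)
    (hq : IntegrableOn q (Icc c d)) (hk : IntegrableOn k (Icc c d))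
    (hk1 : ∀ t ∈ Icc c d, 1 ≤ k t) (hqk : ∀ t ∈ Icc c d, |q t| ≤ k t) :
    |y d| + |Y d| ≤ |y c| + |Y c| + ∫ s in c..d, k s * (|y s| + |Y s|) := by
  have iY : IntervalIntegrable Y volume c d := hY.intervalIntegrable_of_Icc hcd
  have iqy : IntervalIntegrable (fun s => q s * y s) volume c d :=
    (intervalIntegrable_iff_integrableOn_Icc_of_le hcd).2 (hq.mul_continuousOn hy isCompact_Icc)
  have ik : IntervalIntegrable (fun s => k s * (|y s| + |Y s|)) volume c d :=
    (intervalIntegrable_iff_integrableOn_Icc_of_le hcd).2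
      (hk.mul_continuousOn (hy.abs.add hY.abs) isCompact_Icc)
  have hy_le : |y d| ≤ |y c| + ∫ s in c..d, |Y s| := by
    rw [← sub_add_cancel (y d) (y c), ← intervalIntegral.integral_eq_sub_of_hasDerivAt_of_le
      hcd hy hyd iY, add_comm _ (y c)]
    exact (abs_add_le _ _).trans
      (add_le_add_right (intervalIntegral.abs_integral_le_integral_abs hcd) _)
  have hY_le : |Y d| ≤ |Y c| + ∫ s in c..d, |q s * y s| := by
    rw [← sub_add_cancel (Y d) (Y c), ← intervalIntegral.integral_eq_sub_of_hasDerivAt_of_le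
      hcd hY hYd iqy, add_comm _ (Y c)]
    exact (abs_add_le _ _).trans
      (add_le_add_right (intervalIntegral.abs_integral_le_integral_abs hcd) _)
  have hsum : (∫ s in c..d, |Y s|) + ∫ s in c..d, |q s * y s|
      ≤ ∫ s in c..d, k s * (|y s| + |Y s|) := by
    rw [← intervalIntegral.integral_add iY.abs iqy.abs]
    refine intervalIntegral.integral_mono_on hcd (iY.abs.add iqy.abs) ik fun s hs => ?_
    rw [abs_mul]
    nlinarith [mul_le_mul_of_nonneg_right (hqk s hs) (abs_nonneg (y s)),
      mul_le_mul_of_nonneg_right (hk1 s hs) (abs_nonneg (Y s))]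
  linarith

theorem abs_add_abs_le_two_pow_mul {y Y q k : ℝ → ℝ} {c d : ℝ} (hcd : c ≤ d)
    (hy : ContinuousOn y (Icc c d)) (hY : ContinuousOn Y (Icc c d))
    (hyd : ∀ t ∈ Ioo c d, HasDerivAt y (Y t) t) (hYd : ∀ t ∈ Ioo c d, HasDerivAt Y (q t * y t) t)
    (hq : IntegrableOn q (Icc c d)) (hk : IntegrableOn k (Icc c d))
    (hk1 : ∀ t ∈ Icc c d, 1 ≤ k t) (hqk : ∀ t ∈ Icc c d, |q t| ≤ k t)
    {n : ℕ} (hkn : ∫ s in c..d, k s ≤ n / 2) :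
    ∀ t ∈ Icc c d, |y t| + |Y t| ≤ 2 ^ (n + 1) * (|y c| + |Y c|) := by
  refine le_two_pow_mul_of_le_add_integral_mul n hcd (hy.abs.add hY.abs)
    (fun _ _ => by positivity) hk (fun t ht => zero_le_one.trans (hk1 t ht)) hkn
    fun c' hc' r hr => ?_
  have hsub : Icc c' r ⊆ Icc c d := Icc_subset_Icc hc'.1 hr.2
  exact abs_add_abs_le_add_integral hr.1 (hy.mono hsub) (hY.mono hsub)
    (fun t ht => hyd t (Ioo_subset_Ioo hc'.1 hr.2 ht))
    (fun t ht => hYd t (Ioo_subset_Ioo hc'.1 hr.2 ht)) (hq.mono_set hsub) (hk.mono_set hsub)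
    (fun t ht => hk1 t (hsub ht)) (fun t ht => hqk t (hsub ht))

/-- `y` solves `-y'' + V y = lam y` on `[a, b]` with a δ-interaction of strength `α` at `p`;
the derivative `y'` is normalised to be right-continuous at `p`. -/
structure IsDeltaSolution (V : ℝ → ℝ) (a b p α lam : ℝ) (y y' : ℝ → ℝ) : Prop where
  hasDerivAt : ∀ t ∈ Icc a b, t ≠ p → HasDerivAt y (y' t) t
  hasDerivAt_deriv : ∀ t ∈ Icc a b, t ≠ p → HasDerivAt y' ((V t - lam) * y t) t
  tendsto_left : Tendsto y (𝓝[<] p) (𝓝 (y p))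
  tendsto_right : Tendsto y (𝓝[>] p) (𝓝 (y p))
  tendsto_deriv_left : Tendsto y' (𝓝[<] p) (𝓝 (y' p - α * y p))
  tendsto_deriv_right : Tendsto y' (𝓝[>] p) (𝓝 (y' p))

namespace IsDeltaSolution

variable {V : ℝ → ℝ} {a b p α lam : ℝ} {y y' : ℝ → ℝ}

theorem continuousAt (h : IsDeltaSolution V a b p α lam y y') {t : ℝ} (ht : t ∈ Icc a b) :
    ContinuousAt y t := by
  rcases eq_or_ne t p with rfl | htp
  · exact continuousAt_iff_continuous_left'_right'.2 ⟨h.tendsto_left, h.tendsto_right⟩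
  · exact (h.hasDerivAt t ht htp).continuousAt

theorem continuousOn (h : IsDeltaSolution V a b p α lam y y') : ContinuousOn y (Icc a b) :=
  fun _ ht => (h.continuousAt ht).continuousWithinAt

theorem continuousOn_deriv_Icc_right (h : IsDeltaSolution V a b p α lam y y') (hap : a ≤ p) :
    ContinuousOn y' (Icc p b) := by
  intro t ht
  rcases eq_or_lt_of_le ht.1 with rfl | hpt
  · exact (continuousWithinAt_Ioi_iff_Ici.1 h.tendsto_deriv_right).mono Icc_subset_Ici_self
  · exact (h.hasDerivAt_deriv t ⟨hap.trans ht.1, ht.2⟩ hpt.ne').continuousAt.continuousWithinAt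

theorem continuousOn_update_deriv (h : IsDeltaSolution V a b p α lam y y') (hpb : p ≤ b) :
    ContinuousOn (Function.update y' p (y' p - α * y p)) (Icc a p) := by
  intro t ht
  rcases eq_or_lt_of_le ht.2 with rfl | htp
  · exact continuousWithinAt_update_same.2 (h.tendsto_deriv_left.mono_left
      (nhdsWithin_mono _ fun s hs => lt_of_le_of_ne hs.1.2 hs.2))
  · exact ((continuousAt_update_of_ne htp.ne).2
      (h.hasDerivAt_deriv t ⟨ht.1, htp.le.trans hpb⟩ htp.ne).continuousAt).continuousWithinAt

theorem continuousAt_wronskian {μ : ℝ} {z z' : ℝ → ℝ} (hy : IsDeltaSolution V a b p α μ y y')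
    (hz : IsDeltaSolution V a b p α lam z z') {t : ℝ} (ht : t ∈ Icc a b) :
    ContinuousAt (fun s => y' s * z s - y s * z' s) t := by
  rcases eq_or_ne t p with rfl | htp
  · refine continuousAt_iff_continuous_left'_right'.2 ⟨?_, ?_⟩
    · -- the jumps `α y t` and `α z t` of `y'` and `z'` cancel in the Wronskian
      have := (hy.tendsto_deriv_left.mul hz.tendsto_left).sub
        (hy.tendsto_left.mul hz.tendsto_deriv_left)
      refine this.trans_eq (congrArg 𝓝 ?_)
      ring
    · exact (hy.tendsto_deriv_right.mul hz.tendsto_right).sub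
        (hy.tendsto_right.mul hz.tendsto_deriv_right)
  · exact (((hy.hasDerivAt_deriv t ht htp).continuousAt.mul (hz.continuousAt ht)).sub
      ((hy.continuousAt ht).mul (hz.hasDerivAt_deriv t ht htp).continuousAt))

theorem wronskian_eq {μ : ℝ} {z z' : ℝ → ℝ} (hy : IsDeltaSolution V a b p α μ y y')
    (hz : IsDeltaSolution V a b p α lam z z') {x : ℝ} (hx : x ∈ Icc a b) :
    y' x * z x - y x * z' x = y' a * z a - y a * z' a + (lam - μ) * ∫ t in a..x, y t * z t := by
  have hsub : Icc a x ⊆ Icc a b := Icc_subset_Icc_right hx.2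
  have hW : ∀ t ∈ Ioo a x \ {p}, HasDerivAt (fun s => y' s * z s - y s * z' s)
      ((lam - μ) * (y t * z t)) t := by
    rintro t ⟨ht, htp⟩
    have htab : t ∈ Icc a b := hsub (Ioo_subset_Icc_self ht)
    exact (((hy.hasDerivAt_deriv t htab htp).mul (hz.hasDerivAt t htab htp)).sub
      ((hy.hasDerivAt t htab htp).mul (hz.hasDerivAt_deriv t htab htp))).congr_deriv (by ring)
  have hyz : ContinuousOn (fun t => (lam - μ) * (y t * z t)) (Icc a x) :=
    (continuousOn_const.mul (hy.continuousOn.mul hz.continuousOn)).mono hsub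
  have hint := integral_eq_of_hasDerivAt_off_countable_of_le _ _ hx.1 (countable_singleton p)
    (fun t ht => (continuousAt_wronskian hy hz (hsub ht)).continuousWithinAt) hW
    (hyz.intervalIntegrable_of_Icc hx.1)
  rw [intervalIntegral.integral_const_mul] at hint
  linarith

theorem abs_add_abs_update_deriv_le (h : IsDeltaSolution V a b p α lam y y') (hp : p ∈ Ioo a b)
    (hV : IntegrableOn V (Icc a b)) {k : ℝ → ℝ} (hk : IntegrableOn k (Icc a b))
    (hk1 : ∀ t ∈ Icc a b, 1 ≤ k t) (hVk : ∀ t ∈ Icc a b, |V t - lam| ≤ k t) {n : ℕ}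
    (hkn : ∫ s in a..p, k s ≤ n / 2) :
    ∀ t ∈ Icc a p, |y t| + |Function.update y' p (y' p - α * y p) t|
      ≤ 2 ^ (n + 1) * (|y a| + |y' a|) := by
  have hsub : Icc a p ⊆ Icc a b := Icc_subset_Icc_right hp.2.le
  rw [← Function.update_of_ne hp.1.ne (y' p - α * y p) y']
  refine abs_add_abs_le_two_pow_mul hp.1.le (h.continuousOn.mono hsub)
    (h.continuousOn_update_deriv hp.2.le) (fun t ht => ?_) (fun t ht => ?_)
    ((hV.sub (integrableOn_const measure_Icc_lt_top.ne)).mono_set hsub) (hk.mono_set hsub)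
    (fun t ht => hk1 t (hsub ht)) (fun t ht => hVk t (hsub ht)) hkn
  · rw [Function.update_of_ne ht.2.ne]
    exact h.hasDerivAt t (hsub (Ioo_subset_Icc_self ht)) ht.2.ne
  · have hupdate : Function.update y' p (y' p - α * y p) =ᶠ[𝓝 t] y' := by
      filter_upwards [isOpen_compl_singleton.mem_nhds ht.2.ne] with s hs
      exact Function.update_of_ne hs _ _
    exact hupdate.hasDerivAt_iff.2 (h.hasDerivAt_deriv t (hsub (Ioo_subset_Icc_self ht)) ht.2.ne)

theorem abs_add_abs_deriv_le (h : IsDeltaSolution V a b p α lam y y') (hp : p ∈ Ioo a b)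
    (hV : IntegrableOn V (Icc a b)) {k : ℝ → ℝ} (hk : IntegrableOn k (Icc a b))
    (hk1 : ∀ t ∈ Icc a b, 1 ≤ k t) (hVk : ∀ t ∈ Icc a b, |V t - lam| ≤ k t) {n : ℕ}
    (hkn : ∫ s in p..b, k s ≤ n / 2) :
    ∀ t ∈ Icc p b, |y t| + |y' t| ≤ 2 ^ (n + 1) * (|y p| + |y' p|) := by
  have hsub : Icc p b ⊆ Icc a b := Icc_subset_Icc_left hp.1.le
  exact abs_add_abs_le_two_pow_mul hp.2.le (h.continuousOn.mono hsub)
    (h.continuousOn_deriv_Icc_right hp.1.le)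
    (fun t ht => h.hasDerivAt t (hsub (Ioo_subset_Icc_self ht)) ht.1.ne')
    (fun t ht => h.hasDerivAt_deriv t (hsub (Ioo_subset_Icc_self ht)) ht.1.ne')
    ((hV.sub (integrableOn_const measure_Icc_lt_top.ne)).mono_set hsub) (hk.mono_set hsub)
    (fun t ht => hk1 t (hsub ht)) (fun t ht => hVk t (hsub ht)) hkn

theorem abs_le (h : IsDeltaSolution V a b p α lam y y') (hp : p ∈ Ioo a b)
    (hV : IntegrableOn V (Icc a b)) {k : ℝ → ℝ} (hk : IntegrableOn k (Icc a b))
    (hk1 : ∀ t ∈ Icc a b, 1 ≤ k t) (hVk : ∀ t ∈ Icc a b, |V t - lam| ≤ k t) {n : ℕ}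
    (hkn : ∫ s in a..b, k s ≤ n / 2) {t : ℝ} (ht : t ∈ Icc a b) :
    |y t| ≤ 2 ^ (n + 1) * ((1 + |α|) * (2 ^ (n + 1) * (|y a| + |y' a|))) := by
  have hk_le : ∀ c d, a ≤ c → c ≤ d → d ≤ b → ∫ s in c..d, k s ≤ n / 2 := fun c d hac hcd hdb =>
    (intervalIntegral.integral_mono_interval hac hcd hdb
      (ae_restrict_of_forall_mem measurableSet_Ioc fun s hs =>
        zero_le_one.trans (hk1 s (Ioc_subset_Icc_self hs)))
      ((intervalIntegrable_iff_integrableOn_Icc_of_le (hac.trans (hcd.trans hdb))).2 hk)).trans hkn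
  have hleft := h.abs_add_abs_update_deriv_le hp hV hk hk1 hVk (hk_le a p le_rfl hp.1.le hp.2.le)
  have hright := h.abs_add_abs_deriv_le hp hV hk hk1 hVk (hk_le p b hp.1.le hp.2.le le_rfl)
  set Y := Function.update y' p (y' p - α * y p)
  have hjump : |y p| + |y' p| ≤ (1 + |α|) * (2 ^ (n + 1) * (|y a| + |y' a|)) := by
    have hYp_le := hleft p ⟨hp.1.le, le_rfl⟩
    have : |y' p| ≤ |Y p| + |α| * |y p| := by
      rw [show Y p = y' p - α * y p from Function.update_self _ _ _, ← abs_mul]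
      simpa using abs_add_le (y' p - α * y p) (α * y p)
    nlinarith [abs_nonneg α, abs_nonneg (Y p), abs_nonneg (y p)]
  have h2n : (1 : ℝ) ≤ 2 ^ (n + 1) := one_le_pow₀ (by norm_num)
  have hS : 0 ≤ 2 ^ (n + 1) * (|y a| + |y' a|) := by positivity
  rcases le_total t p with htp | hpt
  · have := hleft t ⟨ht.1, htp⟩
    nlinarith [abs_nonneg (Y t), abs_nonneg α, mul_nonneg (abs_nonneg α) hS]
  · have := hright t ⟨hpt, ht.2⟩
    nlinarith [abs_nonneg (y' t), mul_le_mul_of_nonneg_left hjump (zero_le_one.trans h2n)]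

end IsDeltaSolution

theorem exists_eventually_abs_le_of_isDeltaSolution {V : ℝ → ℝ} {a b p α lam₀ S : ℝ}
    (hp : p ∈ Ioo a b) (hV : IntegrableOn V (Icc a b)) {u u' : ℝ → ℝ → ℝ}
    (hsol : ∀ l, IsDeltaSolution V a b p α l (u l) (u' l)) (hS : ∀ l, |u l a| + |u' l a| ≤ S) :
    ∃ M, ∀ᶠ l in 𝓝 lam₀, ∀ t ∈ Icc a b, |u l t| ≤ M := by
  set k : ℝ → ℝ := fun t => |V t| + (|lam₀| + 1)
  have hk : IntegrableOn k (Icc a b) := hV.abs.add (integrableOn_const measure_Icc_lt_top.ne)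
  set n := ⌈2 * ∫ s in a..b, k s⌉₊
  have hkn : ∫ s in a..b, k s ≤ n / 2 := by
    linarith [Nat.le_ceil (2 * ∫ s in a..b, k s)]
  refine ⟨2 ^ (n + 1) * ((1 + |α|) * (2 ^ (n + 1) * S)), ?_⟩
  filter_upwards [eventually_abs_sub_lt lam₀ one_pos] with l hl t ht
  have hVk : ∀ t ∈ Icc a b, |V t - l| ≤ k t := fun t _ => by
    have := abs_sub (V t) l
    have := abs_sub_abs_le_abs_sub l lam₀
    simp only [k]
    linarith
  have hk1 : ∀ t ∈ Icc a b, 1 ≤ k t := fun t _ => by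
    simp only [k]
    linarith [abs_nonneg (V t), abs_nonneg lam₀]
  refine ((hsol l).abs_le hp hV hk hk1 hVk hkn ht).trans ?_
  gcongr
  exact hS l

theorem continuousAt_intervalIntegral_of_abs_le {f : ℝ → ℝ → ℝ} {c d l₀ M : ℝ} (hcd : c ≤ d)
    (hf : ∀ l, ContinuousOn (f l) (Icc c d)) (hM : ∀ᶠ l in 𝓝 l₀, ∀ t ∈ Icc c d, |f l t| ≤ M)
    (hcont : ∀ t ∈ Icc c d, ContinuousAt (fun l => f l t) l₀) :
    ContinuousAt (fun l => ∫ t in c..d, f l t) l₀ := by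
  have hsub : uIoc c d ⊆ Icc c d := uIoc_of_le hcd ▸ Ioc_subset_Icc_self
  refine intervalIntegral.continuousAt_of_dominated_interval (bound := fun _ => M)
    (Eventually.of_forall fun l => ((hf l).mono hsub).aestronglyMeasurable
      (uIoc_of_le hcd ▸ measurableSet_Ioc)) ?_ intervalIntegrable_const
    (ae_of_all _ fun t ht => hcont t (hsub ht))
  filter_upwards [hM] with l hl
  exact ae_of_all _ fun t ht => hl t (hsub ht)

theorem continuousAt_integral_mul_of_isDeltaSolution {V : ℝ → ℝ} {a b p α S : ℝ}
    (hp : p ∈ Ioo a b) (hV : IntegrableOn V (Icc a b)) {u u' : ℝ → ℝ → ℝ}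
    (hsol : ∀ l, IsDeltaSolution V a b p α l (u l) (u' l)) (hS : ∀ l, |u l a| + |u' l a| ≤ S)
    (hcont : ∀ t, Continuous fun l => u l t) {lam x : ℝ} (hx : x ∈ Icc a b) :
    ContinuousAt (fun l => ∫ t in a..x, u lam t * u l t) lam := by
  obtain ⟨M, hM⟩ := exists_eventually_abs_le_of_isDeltaSolution (lam₀ := lam) hp hV hsol hS
  have hsub : Icc a x ⊆ Icc a b := Icc_subset_Icc_right hx.2
  refine continuousAt_intervalIntegral_of_abs_le (M := M * M) hx.1
    (fun l => ((hsol lam).continuousOn.mul (hsol l).continuousOn).mono hsub) ?_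
    fun t _ => continuousAt_const.mul (hcont t).continuousAt
  filter_upwards [hM] with l hl t ht
  have hlam := hM.self_of_nhds t (hsub ht)
  rw [abs_mul]
  exact mul_le_mul hlam (hl t (hsub ht)) (abs_nonneg _) ((abs_nonneg _).trans hlam)

theorem HasDerivAt.eq_of_forall_eq_sub_mul {G F : ℝ → ℝ} {g l₀ : ℝ} (hG : HasDerivAt G g l₀)
    (hF : ContinuousAt F l₀) (hGF : ∀ l, G l = (l - l₀) * F l) : g = F l₀ := by
  refine tendsto_nhds_unique (hasDerivAt_iff_tendsto_slope.1 hG)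
    ((hF.tendsto.mono_left nhdsWithin_le_nhds).congr' ?_)
  filter_upwards [self_mem_nhdsWithin] with l hl
  rw [slope_def_field, hGF, hGF, sub_self, zero_mul, sub_zero,
    mul_div_cancel_left₀ _ (sub_ne_zero.2 hl)]

theorem atkinson_lambda_derivative_quot_inv_general
    (V : ℝ → ℝ) (a b p α θ : ℝ) (hp : p ∈ Ioo a b)
    (hV : IntegrableOn V (Icc a b))
    (u u' : ℝ → ℝ → ℝ)  -- u lam t, u' lam t
    -- for each λ, a solution with δ-interaction of strength α at p
    (hderiv : ∀ lam : ℝ, ∀ t ∈ Icc a b, t ≠ p → HasDerivAt (u lam) (u' lam t) t)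
    (hode : ∀ lam : ℝ, ∀ t ∈ Icc a b, t ≠ p →
      HasDerivAt (u' lam) (V t * u lam t - lam * u lam t) t)
    (hcontR : ∀ lam : ℝ, Tendsto (u lam) (𝓝[>] p) (𝓝 (u lam p)))
    (hcontL : ∀ lam : ℝ, Tendsto (u lam) (𝓝[<] p) (𝓝 (u lam p)))
    (hderR : ∀ lam : ℝ, Tendsto (u' lam) (𝓝[>] p) (𝓝 (u' lam p)))
    (hjump : ∀ lam : ℝ, ∃ dm, Tendsto (u' lam) (𝓝[<] p) (𝓝 dm) ∧
      u' lam p - dm = α * u lam p)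
    -- boundary normalization at a
    (hic : ∀ lam : ℝ, u lam a = Real.sin θ ∧ u' lam a = -Real.cos θ)
    -- entire dependence on λ for each fixed x
    (hentire : ∀ t : ℝ, Differentiable ℝ (fun l => u l t) ∧ Differentiable ℝ (fun l => u' l t))
    (lam x : ℝ) (hx : x ∈ Icc a b) (h0 : u lam x ≠ 0) :
    deriv (fun l => u' l x / u l x) lam
      = -(1 / (u lam x) ^ 2) * ∫ t in a..x, (u lam t) ^ 2 := by
  have hsol : ∀ l, IsDeltaSolution V a b p α l (u l) (u' l) := fun l =>
    { hasDerivAt := hderiv l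
      hasDerivAt_deriv := fun t ht htp => (hode l t ht htp).congr_deriv (sub_mul _ _ _).symm
      tendsto_left := hcontL l
      tendsto_right := hcontR l
      tendsto_deriv_left := by
        obtain ⟨dm, hdm, hdm_eq⟩ := hjump l
        rwa [show u' l p - α * u l p = dm by linarith]
      tendsto_deriv_right := hderR l }
  have hS : ∀ l, |u l a| + |u' l a| ≤ 2 := fun l => by
    rw [(hic l).1, (hic l).2, abs_neg]
    linarith [Real.abs_sin_le_one θ, Real.abs_cos_le_one θ]
  set F := fun l => ∫ t in a..x, u lam t * u l t
  have hWF : ∀ l, u' lam x * u l x - u lam x * u' l x = (l - lam) * F l := fun l => by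
    rw [(hsol lam).wronskian_eq (hsol l) hx, (hic lam).1, (hic lam).2, (hic l).1, (hic l).2]
    ring
  have hF : ContinuousAt F lam := continuousAt_integral_mul_of_isDeltaSolution hp hV hsol hS
    (fun t => (hentire t).1.continuous) hx
  have hw := ((hentire x).1 lam).hasDerivAt
  have hz := ((hentire x).2 lam).hasDerivAt
  have hkey := ((hw.const_mul (u' lam x)).sub (hz.const_mul (u lam x))).eq_of_forall_eq_sub_mul
    hF hWF
  rw [(hz.fun_div hw h0).deriv]
  simp only [F, ← sq] at hkey
  field_simp
  linear_combination -hkey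

/-- **Atkinson-type identity for the λ-derivative of `u/u'`.**
Let `u α λ x = u_{a,α}(λ,x)` be the solution of `-u'' + V u = λ u` on `[a,b]` with a
δ-interaction of strength `α` at `p`, normalized by `u(λ,a) = sin θ`, `u'(λ,a) = -cos θ`,
depending differentiably (entirely) on `λ`.  Then for `x ∈ [a,b] \ {p}` with
`u(λ,x) ≠ 0`,
`∂/∂λ [u'(λ,x)/u(λ,x)] = -(1/u(λ,x)²) ∫_a^x u(λ,t)² dt`. -/
theorem atkinson_lambda_derivative_quot_inv
    (V : ℝ → ℝ) (a b p α θ : ℝ) (hab : a < b) (hp : p ∈ Ioo a b)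
    (hθ : θ ∈ Ico 0 Real.pi) (hV : IntegrableOn V (Icc a b))
    (u u' : ℝ → ℝ → ℝ)  -- u lam t, u' lam t
    -- for each λ, a solution with δ-interaction of strength α at p
    (hderiv : ∀ lam : ℝ, ∀ t ∈ Icc a b, t ≠ p → HasDerivAt (u lam) (u' lam t) t)
    (hode : ∀ lam : ℝ, ∀ t ∈ Icc a b, t ≠ p →
      HasDerivAt (u' lam) (V t * u lam t - lam * u lam t) t)
    (hcontR : ∀ lam : ℝ, Tendsto (u lam) (𝓝[>] p) (𝓝 (u lam p)))
    (hcontL : ∀ lam : ℝ, Tendsto (u lam) (𝓝[<] p) (𝓝 (u lam p)))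
    (hderR : ∀ lam : ℝ, Tendsto (u' lam) (𝓝[>] p) (𝓝 (u' lam p)))
    (hjump : ∀ lam : ℝ, ∃ dm, Tendsto (u' lam) (𝓝[<] p) (𝓝 dm) ∧
      u' lam p - dm = α * u lam p)
    -- boundary normalization at a
    (hic : ∀ lam : ℝ, u lam a = Real.sin θ ∧ u' lam a = -Real.cos θ)
    -- entire dependence on λ for each fixed x
    (hentire : ∀ t : ℝ, Differentiable ℝ (fun l => u l t) ∧ Differentiable ℝ (fun l => u' l t))
    (lam x : ℝ) (hx : x ∈ Icc a b) (hxp : x ≠ p) (h0 : u lam x ≠ 0) :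
    deriv (fun l => u' l x / u l x) lam
      = -(1 / (u lam x) ^ 2) * ∫ t in a..x, (u lam t) ^ 2 :=
  atkinson_lambda_derivative_quot_inv_general V a b p α θ hp hV u u' hderiv hode hcontR hcontL hderR
    hjump hic hentire lam x hx h0
end

section
/- Fix E ∈ ℝ and consider the family H_{α,p} (regular Sturm-Liouville operators with a single δ-interaction of strength α at p and fixed separated boundary conditions). Define A(E) = {α ∈ ℝ : E ∈ σ_p(H_{α,p})}. Then either A(E) has at most one element, or A(E) = ℝ. -/
open Filter Topology Set

/-!
Two eigenfunctions `u₁, u₂` for the same energy `E` have a Wronskian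
`W = u₁ u₂' - u₁' u₂` which is constant on `[a, p)` and on `(p, b]`, and vanishes at `a` and `b`
because both functions satisfy the same boundary conditions. So `W(p-) = W(p+) = 0`, while the jump
conditions give `W(p+) - W(p-) = (α₁ - α₂) u₁(p) u₂(p)`. Hence two distinct couplings force
`u(p) = 0` for an eigenfunction, and an eigenfunction vanishing at `p` does not see the coupling
at all, so it is an eigenfunction for every `α`.
-/

/-- `u` (with derivative `u'`) is an eigenfunction of the regular Sturm–Liouville
operator `H_{α,p}` on `[a,b]` with potential `V`, δ-interaction of strength `α` at `p`,
eigenvalue `E` and separated boundary conditions with angles `θ` (at `a`), `γ` (at `b`).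
The value `u' p` is the right limit `u'(p+)`. -/
structure OneDeltaEigenfun (V : ℝ → ℝ) (a b p θ γ : ℝ) (α E : ℝ) (u u' : ℝ → ℝ) : Prop where
  deriv : ∀ t ∈ Set.Icc a b, t ≠ p → HasDerivAt u (u' t) t
  ode : ∀ t ∈ Set.Icc a b, t ≠ p → HasDerivAt u' (V t * u t - E * u t) t
  contR : Filter.Tendsto u (nhdsWithin p (Set.Ioi p)) (nhds (u p))
  contL : Filter.Tendsto u (nhdsWithin p (Set.Iio p)) (nhds (u p))
  derivR : Filter.Tendsto u' (nhdsWithin p (Set.Ioi p)) (nhds (u' p))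
  jump : ∃ dm, Filter.Tendsto u' (nhdsWithin p (Set.Iio p)) (nhds dm) ∧ u' p - dm = α * u p
  bca : u a * Real.cos θ + u' a * Real.sin θ = 0
  bcb : u b * Real.cos γ + u' b * Real.sin γ = 0

def wronskian (u₁ u₁' u₂ u₂' : ℝ → ℝ) (t : ℝ) : ℝ := u₁ t * u₂' t - u₁' t * u₂ t

lemma mul_sub_mul_eq_zero_of_cos_sin {x₁ y₁ x₂ y₂ θ : ℝ}
    (h₁ : x₁ * Real.cos θ + y₁ * Real.sin θ = 0) (h₂ : x₂ * Real.cos θ + y₂ * Real.sin θ = 0) :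
    x₁ * y₂ - y₁ * x₂ = 0 := by
  linear_combination (Real.cos θ * y₂ - Real.sin θ * x₂) * h₁ +
    (Real.sin θ * x₁ - Real.cos θ * y₁) * h₂ - (x₁ * y₂ - y₁ * x₂) * Real.sin_sq_add_cos_sq θ

lemma eq_of_forall_hasDerivAt_zero {f : ℝ → ℝ} {c d : ℝ} (hcd : c ≤ d)
    (hf : ∀ x ∈ Icc c d, HasDerivAt f 0 x) : f d = f c :=
  constant_of_has_deriv_right_zero (fun x hx => (hf x hx).continuousAt.continuousWithinAt)
    (fun x hx => (hf x (Ico_subset_Icc_self hx)).hasDerivWithinAt) d (right_mem_Icc.2 hcd)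

namespace OneDeltaEigenfun

variable {V : ℝ → ℝ} {a b p θ γ E : ℝ}

lemma of_apply_eq_zero {α : ℝ} {u u' : ℝ → ℝ} (h : OneDeltaEigenfun V a b p θ γ α E u u')
    (hup : u p = 0) (β : ℝ) : OneDeltaEigenfun V a b p θ γ β E u u' := by
  obtain ⟨dm, hdm, hj⟩ := h.jump
  exact { h with jump := ⟨dm, hdm, by rw [hup, mul_zero] at hj ⊢; exact hj⟩ }

variable {α₁ α₂ : ℝ} {u₁ u₁' u₂ u₂' : ℝ → ℝ}
  (h₁ : OneDeltaEigenfun V a b p θ γ α₁ E u₁ u₁')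
  (h₂ : OneDeltaEigenfun V a b p θ γ α₂ E u₂ u₂')
include h₁ h₂

lemma hasDerivAt_wronskian {t : ℝ} (ht : t ∈ Icc a b) (htp : t ≠ p) :
    HasDerivAt (wronskian u₁ u₁' u₂ u₂') 0 t :=
  (((h₁.deriv t ht htp).mul (h₂.ode t ht htp)).sub
    ((h₁.ode t ht htp).mul (h₂.deriv t ht htp))).congr_deriv (by ring)

lemma wronskian_eq_of_Icc_subset {s t : ℝ} (hst : s ≤ t) (hsub : Icc s t ⊆ Icc a b \ {p}) :
    wronskian u₁ u₁' u₂ u₂' t = wronskian u₁ u₁' u₂ u₂' s :=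
  eq_of_forall_hasDerivAt_zero hst fun _ hx => h₁.hasDerivAt_wronskian h₂ (hsub hx).1 (hsub hx).2

lemma wronskian_left_eq_zero {t : ℝ} (ht : t ∈ Ico a p) (hpb : p ≤ b) :
    wronskian u₁ u₁' u₂ u₂' t = 0 := by
  rw [h₁.wronskian_eq_of_Icc_subset h₂ ht.1 fun x hx =>
    ⟨⟨hx.1, hx.2.trans (ht.2.le.trans hpb)⟩, (hx.2.trans_lt ht.2).ne⟩]
  exact mul_sub_mul_eq_zero_of_cos_sin h₁.bca h₂.bca

lemma wronskian_right_eq_zero {t : ℝ} (ht : t ∈ Ioc p b) (hap : a ≤ p) :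
    wronskian u₁ u₁' u₂ u₂' t = 0 := by
  rw [← h₁.wronskian_eq_of_Icc_subset h₂ ht.2 fun x hx =>
    ⟨⟨(hap.trans ht.1.le).trans hx.1, hx.2⟩, (ht.1.trans_le hx.1).ne'⟩]
  exact mul_sub_mul_eq_zero_of_cos_sin h₁.bcb h₂.bcb

lemma coupling_eq_of_apply_ne_zero (hp : p ∈ Ioo a b) (hu₁ : u₁ p ≠ 0) (hu₂ : u₂ p ≠ 0) :
    α₁ = α₂ := by
  obtain ⟨dm₁, hdm₁, hj₁⟩ := h₁.jump
  obtain ⟨dm₂, hdm₂, hj₂⟩ := h₂.jump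
  have hleft : u₁ p * dm₂ - dm₁ * u₂ p = 0 :=
    tendsto_nhds_unique_of_eventuallyEq ((h₁.contL.mul hdm₂).sub (hdm₁.mul h₂.contL))
      tendsto_const_nhds <| by
        filter_upwards [Ioo_mem_nhdsLT hp.1] with x hx
        exact h₁.wronskian_left_eq_zero h₂ ⟨hx.1.le, hx.2⟩ hp.2.le
  have hright : u₁ p * u₂' p - u₁' p * u₂ p = 0 :=
    tendsto_nhds_unique_of_eventuallyEq ((h₁.contR.mul h₂.derivR).sub (h₁.derivR.mul h₂.contR))
      tendsto_const_nhds <| by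
        filter_upwards [Ioo_mem_nhdsGT hp.2] with x hx
        exact h₁.wronskian_right_eq_zero h₂ ⟨hx.1, hx.2.le⟩ hp.1.le
  have key : (α₁ - α₂) * (u₁ p * u₂ p) = 0 := by
    linear_combination (-(u₂ p)) * hj₁ + u₁ p * hj₂ - hright + hleft
  exact sub_eq_zero.1 ((mul_eq_zero.1 key).resolve_right (mul_ne_zero hu₁ hu₂))

end OneDeltaEigenfun

theorem coupling_set_subsingleton_or_univ_general
    (V : ℝ → ℝ) (a b p θ γ E : ℝ) (hp : p ∈ Ioo a b) :
    {α : ℝ | ∃ u u' : ℝ → ℝ, (∃ t ∈ Icc a b, u t ≠ 0) ∧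
        OneDeltaEigenfun V a b p θ γ α E u u'}.Subsingleton ∨
    {α : ℝ | ∃ u u' : ℝ → ℝ, (∃ t ∈ Icc a b, u t ≠ 0) ∧
        OneDeltaEigenfun V a b p θ γ α E u u'} = univ := by
  by_cases hvanish : ∃ α u u', (∃ t ∈ Icc a b, u t ≠ 0) ∧
      OneDeltaEigenfun V a b p θ γ α E u u' ∧ u p = 0
  · obtain ⟨α, u, u', hnt, h, hup⟩ := hvanish
    exact Or.inr <| eq_univ_of_forall fun β => ⟨u, u', hnt, h.of_apply_eq_zero hup β⟩
  · push Not at hvanish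
    refine Or.inl ?_
    rintro α₁ ⟨u₁, u₁', hnt₁, h₁⟩ α₂ ⟨u₂, u₂', hnt₂, h₂⟩
    exact h₁.coupling_eq_of_apply_ne_zero h₂ hp (hvanish α₁ u₁ u₁' hnt₁ h₁)
      (hvanish α₂ u₂ u₂' hnt₂ h₂)

/-- **Dichotomy for the coupling constants for which `E` is an eigenvalue.**
For fixed `E ∈ ℝ`, the set `A(E) = {α : E ∈ σ_p(H_{α,p})}` either has at most one
element or is all of `ℝ`. -/
theorem coupling_set_subsingleton_or_univ
    (V : ℝ → ℝ) (a b p θ γ E : ℝ) (hab : a < b) (hp : p ∈ Ioo a b)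
    (hθ : θ ∈ Ico 0 Real.pi) (hγ : γ ∈ Ico 0 Real.pi)
    (hV : MeasureTheory.IntegrableOn V (Icc a b)) :
    {α : ℝ | ∃ u u' : ℝ → ℝ, (∃ t ∈ Icc a b, u t ≠ 0) ∧
        OneDeltaEigenfun V a b p θ γ α E u u'}.Subsingleton ∨
    {α : ℝ | ∃ u u' : ℝ → ℝ, (∃ t ∈ Icc a b, u t ≠ 0) ∧
        OneDeltaEigenfun V a b p θ γ α E u u'} = univ :=
  coupling_set_subsingleton_or_univ_general V a b p θ γ E hp
end

section
/- For Sturm-Liouville operators with a δ'-interaction of strength α at an interior point p (conditions u'(p+)=u'(p-), u(p+)-u(p-)=α u'(p)), define the modified diagonal Green function G̃_α(z;p,p) = u'_{a,α}(z,p) u'_{b,α}(z,p) / W_p(u_{a,α}(z), u_{b,α}(z)). Then G̃_α(z;p,p) = G̃_0(z;p,p) / (1 + α G̃_0(z;p,p)). -/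
open Filter Topology Set

/-!
The interaction leaves `u_{b,α}` unchanged on `[p, b]`, and it changes `u_{a,α}` at `p` only
through the jump condition: `u'_{a,α}(p) = u'_{a,0}(p)` and
`u_{a,α}(p+) = u_{a,0}(p) + α u'_{a,0}(p)`. The Wronskian at `p` therefore becomes
`W₀ + α u'_{a,0}(p) u'_{b,0}(p)`, and dividing numerator and denominator by `W₀` gives the
Möbius transformation `G̃ ↦ G̃ / (1 + α G̃)`.
-/

/-- `G̃(p,p) = u'(p) v'(p) / W_p(u, v)`, written in terms of the boundary values at `p`. -/
def greenDiag {K : Type*} [Field K] (u u' v v' : K) : K :=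
  u' * v' / (u * v' - u' * v)

theorem greenDiag_add_mul_deriv {K : Type*} [Field K] {u u' v v' : K} (α : K)
    (hW : u * v' - u' * v ≠ 0) :
    greenDiag (u + α * u') u' v v'
      = greenDiag u u' v v' / (1 + α * greenDiag u u' v v') := by
  have hden : (u + α * u') * v' - u' * v = (u * v' - u' * v) + α * (u' * v') := by ring
  have hone : 1 + α * greenDiag u u' v v'
      = ((u * v' - u' * v) + α * (u' * v')) / (u * v' - u' * v) := by
    rw [greenDiag, mul_div_assoc', one_add_div hW]
  rw [hone, greenDiag, greenDiag, hden, div_div_div_cancel_right₀ hW]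

theorem green_function_one_delta_prime_interaction_general
    (V : ℝ → ℝ) (a b p : ℝ) (α : ℝ) (z : ℂ)
    (hp : p ∈ Ioo a b)
    (ua₀ ua₀' uaα uaα' ub₀ ub₀' ubα ubα' : ℝ → ℂ)
    -- free solutions (no interaction): classical solutions on all of [a,b]
    (h0a : ∀ t ∈ Icc a b, HasDerivAt ua₀ (ua₀' t) t ∧
      HasDerivAt ua₀' ((V t : ℂ) * ua₀ t - z * ua₀ t) t)
    -- δ'-interaction conditions at p: u' continuous, u jumps by α u'(p)
    -- (values at p are right limits)
    (hjumpa : ∃ um, Tendsto uaα (𝓝[<] p) (𝓝 um) ∧ uaα p - um = (α : ℂ) * uaα' p)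
    -- agreement: u_{a,α} = u_{a,0} on x < p (x ≤ p for the derivative), and
    -- u_{b,α} = u_{b,0} on x ≥ p
    (heqa : ∀ t < p, uaα t = ua₀ t) (heqa' : ∀ t ≤ p, uaα' t = ua₀' t)
    (heqb : ∀ t, p ≤ t → ubα t = ub₀ t ∧ ubα' t = ub₀' t)
    -- the free Wronskian does not vanish (z is not an eigenvalue of H₀)
    (hW₀ : ua₀ p * ub₀' p - ua₀' p * ub₀ p ≠ 0) :
    uaα' p * ubα' p / (uaα p * ubα' p - uaα' p * ubα p)
      = (ua₀' p * ub₀' p / (ua₀ p * ub₀' p - ua₀' p * ub₀ p))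
        / (1 + (α : ℂ) * (ua₀' p * ub₀' p / (ua₀ p * ub₀' p - ua₀' p * ub₀ p))) := by
  obtain ⟨um, hum, hjump⟩ := hjumpa
  have hua₀_cont : ContinuousAt ua₀ p := (h0a p (Ioo_subset_Icc_self hp)).1.continuousAt
  have hleft : um = ua₀ p :=
    tendsto_nhds_unique_of_eventuallyEq hum hua₀_cont.continuousWithinAt.tendsto
      (eventually_nhdsWithin_of_forall heqa)
  have hua' : uaα' p = ua₀' p := heqa' p le_rfl
  have hua : uaα p = ua₀ p + α * ua₀' p := by
    rw [← hleft, ← hua']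
    linear_combination hjump
  obtain ⟨hub, hub'⟩ := heqb p le_rfl
  change greenDiag (uaα p) (uaα' p) (ubα p) (ubα' p)
    = greenDiag (ua₀ p) (ua₀' p) (ub₀ p) (ub₀' p)
      / (1 + α * greenDiag (ua₀ p) (ua₀' p) (ub₀ p) (ub₀' p))
  rw [hua, hua', hub, hub']
  exact greenDiag_add_mul_deriv _ hW₀

/-- **The modified diagonal Green function with one δ'-interaction.**
Let `u_{a,α}, u_{b,α}` solve `-u'' + V u = z u` on `[a,b]` with a δ'-interaction of
strength `α` at `p` (conditions `u'(p+) = u'(p-)`, `u(p+) - u(p-) = α u'(p)`),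
satisfying fixed boundary conditions at `a` resp. `b`, and let `u_{a,0}, u_{b,0}` be
the corresponding solutions without interaction, agreeing with them on `x ≤ p` resp.
`x ≥ p`.  With `G̃_α(z;p,p) = u'_{a,α}(p) u'_{b,α}(p) / W_p(u_{a,α},u_{b,α})`,
one has `G̃_α(z;p,p) = G̃₀(z;p,p) / (1 + α G̃₀(z;p,p))`.
(Values at `p` are right limits; `W₀(p) ≠ 0` so that `G̃₀` is defined.) -/
theorem green_function_one_delta_prime_interaction
    (V : ℝ → ℝ) (a b p : ℝ) (α : ℝ) (z : ℂ) (θ γ : ℝ)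
    (hab : a < b) (hp : p ∈ Ioo a b) (hV : MeasureTheory.IntegrableOn V (Icc a b))
    (ua₀ ua₀' uaα uaα' ub₀ ub₀' ubα ubα' : ℝ → ℂ)
    -- free solutions (no interaction): classical solutions on all of [a,b]
    (h0a : ∀ t ∈ Icc a b, HasDerivAt ua₀ (ua₀' t) t ∧
      HasDerivAt ua₀' ((V t : ℂ) * ua₀ t - z * ua₀ t) t)
    (h0b : ∀ t ∈ Icc a b, HasDerivAt ub₀ (ub₀' t) t ∧
      HasDerivAt ub₀' ((V t : ℂ) * ub₀ t - z * ub₀ t) t)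
    -- interacting solutions: classical away from p
    (hαa : ∀ t ∈ Icc a b, t ≠ p → HasDerivAt uaα (uaα' t) t ∧
      HasDerivAt uaα' ((V t : ℂ) * uaα t - z * uaα t) t)
    (hαb : ∀ t ∈ Icc a b, t ≠ p → HasDerivAt ubα (ubα' t) t ∧
      HasDerivAt ubα' ((V t : ℂ) * ubα t - z * ubα t) t)
    -- δ'-interaction conditions at p: u' continuous, u jumps by α u'(p)
    -- (values at p are right limits)
    (hconta' : Tendsto uaα' (𝓝[<] p) (𝓝 (uaα' p)))
    (hcontb' : Tendsto ubα' (𝓝[<] p) (𝓝 (ubα' p)))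
    (hjumpa : ∃ um, Tendsto uaα (𝓝[<] p) (𝓝 um) ∧ uaα p - um = (α : ℂ) * uaα' p)
    (hjumpb : ∃ um, Tendsto ubα (𝓝[<] p) (𝓝 um) ∧ ubα p - um = (α : ℂ) * ubα' p)
    -- boundary conditions at a and at b
    (hbca0 : ua₀ a * (Real.cos θ : ℂ) + ua₀' a * (Real.sin θ : ℂ) = 0)
    (hbcaα : uaα a * (Real.cos θ : ℂ) + uaα' a * (Real.sin θ : ℂ) = 0)
    (hbcb0 : ub₀ b * (Real.cos γ : ℂ) + ub₀' b * (Real.sin γ : ℂ) = 0)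
    (hbcbα : ubα b * (Real.cos γ : ℂ) + ubα' b * (Real.sin γ : ℂ) = 0)
    -- agreement: u_{a,α} = u_{a,0} on x < p (x ≤ p for the derivative), and
    -- u_{b,α} = u_{b,0} on x ≥ p
    (heqa : ∀ t < p, uaα t = ua₀ t) (heqa' : ∀ t ≤ p, uaα' t = ua₀' t)
    (heqb : ∀ t, p ≤ t → ubα t = ub₀ t ∧ ubα' t = ub₀' t)
    -- the free Wronskian does not vanish (z is not an eigenvalue of H₀)
    (hW₀ : ua₀ p * ub₀' p - ua₀' p * ub₀ p ≠ 0) :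
    uaα' p * ubα' p / (uaα p * ubα' p - uaα' p * ubα p)
      = (ua₀' p * ub₀' p / (ua₀ p * ub₀' p - ua₀' p * ub₀ p))
        / (1 + (α : ℂ) * (ua₀' p * ub₀' p / (ua₀ p * ub₀' p - ua₀' p * ub₀ p))) :=
  green_function_one_delta_prime_interaction_general V a b p α z hp ua₀ ua₀' uaα uaα' ub₀ ub₀' ubα
    ubα' h0a hjumpa heqa heqa' heqb hW₀
end
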